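/- arXiv:2011.03212 — 9 statements merged into one kernel-verified Lean document; each statement's English description precedes it below -/
import Mathlib

section
/- Let l and k be positive integers with l ≤ k, and suppose the page universe Ω satisfies |Ω| ≥ k+1. Then no deterministic online algorithm for the file-bundle caching problem with cache size k achieves a competitive ratio better than k − l + 1: for every deterministic online algorithm A with cache size k, every real r < k − l + 1, and every real c, there exists a finite query sequence σ whose queries have cardinality l such that A(σ) > r · OPT_k(σ) + c. -/
/-!
Restrict to `k + 1` pages `U` and fix a core `S ⊆ U` of `l - 1` pages; every query is `S` plus one
page of `U \ S`, which has `m + 1` elements for `m = k - l + 1`. The online cache holds only `k`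
of the `k + 1` pages of `U`, so the adversary can always choose a query the online algorithm misses,
and it pays `T` on `T` queries. An offline cache serving these queries is `U` minus one page of
`U \ S`. Evicting, at each miss, a page that is not requested during the next `m - 1` steps (one
exists among the `m + 1` candidates) keeps consecutive misses at least `m` steps apart, so
`OPT ≤ T / m`.
-/

variable {Ω : Type*}

/-- A caching schedule with cache size `k` serving queries `Q 1, …, Q T`
(the cache contents are `C 1, …, C (T+1)`): on a hit the cache is unchanged,
on a miss the query is inserted into the next cache. -/
def IsSchedule [DecidableEq Ω] (k T : ℕ) (Q C : ℕ → Finset Ω) : Prop :=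
  (∀ t, 1 ≤ t → t ≤ T + 1 → (C t).card = k) ∧
  ∀ t, 1 ≤ t → t ≤ T →
    (Q t ⊆ C t → C (t + 1) = C t) ∧ (¬ Q t ⊆ C t → Q t ⊆ C (t + 1))

/-- The number of cache misses of the cache sequence `C` on queries `Q 1, …, Q T`. -/
def cost [DecidableEq Ω] (T : ℕ) (Q C : ℕ → Finset Ω) : ℕ :=
  ((Finset.Icc 1 T).filter fun t => ¬ Q t ⊆ C t).card

/-- The optimal offline cost with cache size `k` on queries `Q 1, …, Q T`. -/
noncomputable def OPT [DecidableEq Ω] (k T : ℕ) (Q : ℕ → Finset Ω) : ℕ :=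
  sInf {n : ℕ | ∃ C : ℕ → Finset Ω, IsSchedule k T Q C ∧ cost T Q C = n}

/-- The cache sequence induced by the deterministic online algorithm given by the
initial cache `C1` and the update map `A`: `C 1 = C1` and `C (t+1) = A [Q 1, …, Q t]`. -/
def inducedCaches (C1 : Finset Ω) (A : List (Finset Ω) → Finset Ω) (Q : ℕ → Finset Ω) :
    ℕ → Finset Ω :=
  fun t => if t ≤ 1 then C1 else A ((List.range (t - 1)).map fun s => Q (s + 1))

open Finset

lemma exists_mem_sdiff_insert_subset_imp_subset {U S : Finset Ω} [DecidableEq Ω]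
    (hUS : (U \ S).Nonempty) (C : Finset Ω) : ∃ x ∈ U \ S, insert x S ⊆ C → U ⊆ C := by
  by_cases hUC : U ⊆ C
  · obtain ⟨x, hx⟩ := hUS
    exact ⟨x, hx, fun _ => hUC⟩
  by_contra! hall
  refine hUC fun y hy => ?_
  by_cases hyS : y ∈ S
  · obtain ⟨x, hx⟩ := hUS
    exact (hall x hx).1 (mem_insert_of_mem hyS)
  · exact (hall y (mem_sdiff.2 ⟨hy, hyS⟩)).1 (mem_insert_self y S)

lemma insert_subset_sdiff_singleton_iff [DecidableEq Ω] {U S : Finset Ω} {x p : Ω}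
    (hSU : S ⊆ U) (hx : x ∈ U) (hp : p ∉ S) : insert x S ⊆ U \ {p} ↔ x ≠ p := by
  simp [subset_sdiff, insert_subset_iff, hx, hSU, hp, eq_comm]

lemma exists_mem_forall_ne_of_lt_card {s : Finset Ω} {m : ℕ} (hs : m < #s) (f : ℕ → Ω) :
    ∃ p ∈ s, ∀ i < m, f i ≠ p := by
  classical
  obtain ⟨p, hp, hpf⟩ := exists_mem_notMem_of_card_lt_card
    (s := (range m).image f) (card_image_le.trans_lt (by simpa using hs))
  exact ⟨p, hp, fun i hi hfi => hpf (mem_image.2 ⟨i, mem_range.2 hi, hfi⟩)⟩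

lemma card_le_div_of_separated {M : Finset ℕ} {m T : ℕ} (hm : 0 < m)
    (hM : ∀ t ∈ M, m ≤ t ∧ t ≤ T) (hsep : ∀ s ∈ M, ∀ t ∈ M, s < t → s + m ≤ t) :
    #M ≤ T / m := by
  have hmono : StrictMonoOn (· / m) (M : Set ℕ) := fun s hs t ht hst => by
    have := Nat.div_le_div_right (c := m) (hsep s hs t ht hst)
    rw [Nat.add_div_right _ hm] at this
    exact this
  simpa using card_le_card_of_injOn (t := Icc 1 (T / m)) (· / m)
    (fun t ht => mem_Icc.2 ⟨(Nat.one_le_div_iff hm).2 (hM t ht).1,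
      Nat.div_le_div_right (hM t ht).2⟩) hmono.injOn

lemma cost_eq_of_forall_miss [DecidableEq Ω] {T : ℕ} {Q C : ℕ → Finset Ω}
    (h : ∀ t, 1 ≤ t → t ≤ T → ¬ Q t ⊆ C t) : cost T Q C = T := by
  rw [cost, filter_true_of_mem fun t ht => h t (mem_Icc.1 ht).1 (mem_Icc.1 ht).2,
    Nat.card_Icc, Nat.add_sub_cancel]

lemma exists_nat_forall_le_mul_add_lt {r m : ℝ} (hm : 0 < m) (hr : r < m) (c : ℝ) :
    ∃ N : ℕ, ∀ n : ℕ, n ≤ N → r * n + c < m * N := by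
  set r' := max r 0
  have hr' : r' < m := max_lt hr hm
  obtain ⟨N, hN⟩ := exists_nat_gt (c / (m - r'))
  refine ⟨N, fun n hn => ?_⟩
  have hc : c < (m - r') * N := (div_lt_iff₀' (sub_pos.2 hr')).1 hN
  have hrn : r * n ≤ r' * N :=
    (mul_le_mul_of_nonneg_right (le_max_left r 0) n.cast_nonneg).trans
      (mul_le_mul_of_nonneg_left (Nat.cast_le.2 hn) (le_max_right r 0))
  linarith

section Adaptive

variable (C1 : Finset Ω) (A : List (Finset Ω) → Finset Ω) (next : Finset Ω → Finset Ω)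

/-- The first `n` queries of the adversary that answers the current online cache `C` with the
query `next C`. -/
def adaptiveHistory : ℕ → List (Finset Ω)
  | 0 => []
  | n + 1 => adaptiveHistory n ++ [next (if n = 0 then C1 else A (adaptiveHistory n))]

theorem exists_forall_eq_next_inducedCaches :
    ∃ Q : ℕ → Finset Ω, ∀ t, Q t = next (inducedCaches C1 A Q t) := by
  set H := adaptiveHistory C1 A next
  let Q t := next (if t ≤ 1 then C1 else A (H (t - 1)))
  have hH : ∀ n, H n = (List.range n).map fun s => Q (s + 1) := by
    intro n
    induction n with
    | zero => rfl
    | succ n ih =>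
      show H n ++ _ = _
      rw [List.range_succ, List.map_append, ← ih]
      simp only [List.map_cons, List.map_nil, add_le_iff_nonpos_left, nonpos_iff_eq_zero,
        add_tsub_cancel_right, Q]
      rfl
  exact ⟨Q, fun t => by simp only [inducedCaches, ← hH, Q]⟩

end Adaptive

section LazyEviction

variable [DecidableEq Ω] (y pick : ℕ → Ω)

/-- The page of `U` left out of the offline cache at time `t` when the `t`-th query is
`insert (y t) S`: it is replaced by `pick t` exactly at a miss. -/
def lazyEviction : ℕ → Ω
  | 0 => pick 0
  | t + 1 => if y t = lazyEviction t then pick t else lazyEviction t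

lemma lazyEviction_mem {s : Finset Ω} (hpick : ∀ t, pick t ∈ s) (t : ℕ) :
    lazyEviction y pick t ∈ s := by
  induction t with
  | zero => exact hpick 0
  | succ t ih =>
    rw [lazyEviction]
    split_ifs
    exacts [hpick t, ih]

lemma lazyEviction_succ_of_eq {t : ℕ} (h : y t = lazyEviction y pick t) :
    lazyEviction y pick (t + 1) = pick t := by
  rw [lazyEviction, if_pos h]

lemma lazyEviction_add_of_forall_ne {t n : ℕ}
    (h : ∀ j < n, y (t + j) ≠ lazyEviction y pick t) :
    lazyEviction y pick (t + n) = lazyEviction y pick t := by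
  induction n with
  | zero => rfl
  | succ n ih =>
    have ih := ih fun j hj => h j (by omega)
    rw [← add_assoc, lazyEviction, if_neg (ih ▸ h n (by omega)), ih]

variable {m : ℕ} (hpick : ∀ t, ∀ i < m, y (t + i) ≠ pick t)
include hpick

lemma ne_lazyEviction_of_eq_pick {s u t : ℕ} (hu : lazyEviction y pick u = pick s)
    (hsu : s ≤ u) (hut : u ≤ t) (hts : t < s + m) : y t ≠ lazyEviction y pick t := by
  obtain ⟨n, rfl⟩ := Nat.exists_eq_add_of_le hut
  rw [lazyEviction_add_of_forall_ne, hu]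
  · simpa [show s + (u - s + n) = u + n by omega] using hpick s (u - s + n) (by omega)
  · intro j hj
    simpa [hu, show s + (u - s + j) = u + j by omega] using hpick s (u - s + j) (by omega)

lemma ne_lazyEviction_of_lt {t : ℕ} (ht : t < m) : y t ≠ lazyEviction y pick t :=
  ne_lazyEviction_of_eq_pick y pick hpick rfl le_rfl (Nat.zero_le t) (by omega)

lemma ne_lazyEviction_of_eq {s t : ℕ} (hs : y s = lazyEviction y pick s) (hst : s < t)
    (hts : t < s + m) : y t ≠ lazyEviction y pick t :=
  ne_lazyEviction_of_eq_pick y pick hpick (lazyEviction_succ_of_eq y pick hs)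
    (Nat.le_succ s) hst hts

lemma card_filter_eq_lazyEviction_le (hm : 0 < m) (T : ℕ) :
    #((Icc 1 T).filter fun t => y t = lazyEviction y pick t) ≤ T / m := by
  refine card_le_div_of_separated hm (fun t ht => ?_) (fun s hs t ht hst => ?_)
  · rw [mem_filter, mem_Icc] at ht
    exact ⟨not_lt.1 fun hlt => ne_lazyEviction_of_lt y pick hpick hlt ht.2, ht.1.2⟩
  · rw [mem_filter] at hs ht
    exact not_lt.1 fun hlt => ne_lazyEviction_of_eq y pick hpick hs.2 hst hlt ht.2

end LazyEviction

theorem OPT_le_div [DecidableEq Ω] {U S : Finset Ω} {k m T : ℕ} {Q : ℕ → Finset Ω}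
    (hU : #U = k + 1) (hSU : S ⊆ U) (hUS : #(U \ S) = m + 1) (hm : 0 < m)
    (hQ : ∀ t, ∃ y ∈ U \ S, Q t = insert y S) : OPT k T Q ≤ T / m := by
  choose y hy hQ using hQ
  choose pick hpickUS hpick using fun t =>
    exists_mem_forall_ne_of_lt_card (s := U \ S) (m := m) (by omega) fun i => y (t + i)
  set e := lazyEviction y pick
  have he : ∀ t, e t ∈ U \ S := lazyEviction_mem y pick hpickUS
  have hhit : ∀ t, Q t ⊆ U \ {e t} ↔ y t ≠ e t := fun t => by
    rw [hQ]
    exact insert_subset_sdiff_singleton_iff hSU (mem_sdiff.1 (hy t)).1 (mem_sdiff.1 (he t)).2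
  have hsched : IsSchedule k T Q fun t => U \ {e t} := by
    refine ⟨fun t _ _ => ?_, fun t _ _ => ⟨fun hit => ?_, fun hmiss => ?_⟩⟩
    · rw [card_sdiff_of_subset (singleton_subset_iff.2 (mem_sdiff.1 (he t)).1), hU]
      rfl
    · rw [hhit, ne_eq] at hit
      simp only [e, lazyEviction, if_neg hit]
    · rw [hhit, not_not] at hmiss
      have he1 : e (t + 1) = pick t := lazyEviction_succ_of_eq y pick hmiss
      show Q t ⊆ U \ {e (t + 1)}
      rw [he1, hQ, insert_subset_sdiff_singleton_iff hSU
        (mem_sdiff.1 (hy t)).1 (mem_sdiff.1 (hpickUS t)).2]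
      simpa using hpick t 0 hm
  refine (show OPT k T Q ≤ cost T Q _ from Nat.sInf_le ⟨_, hsched, rfl⟩).trans ?_
  simp only [cost, hhit, not_not]
  exact card_filter_eq_lazyEviction_le y pick hpick hm T

theorem stmt0_general [DecidableEq Ω] [Fintype Ω] (l k : ℕ) (hl : 0 < l) (hlk : l ≤ k)
    (hΩ : k + 1 ≤ Fintype.card Ω)
    (C1 : Finset Ω)
    (A : List (Finset Ω) → Finset Ω)
    (hA : ∀ (T : ℕ) (Q : ℕ → Finset Ω), (∀ t, 1 ≤ t → t ≤ T → (Q t).card = l) →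
      IsSchedule k T Q (inducedCaches C1 A Q))
    (r c : ℝ) (hr : r < (k : ℝ) - l + 1) :
    ∃ (T : ℕ) (Q : ℕ → Finset Ω), (∀ t, 1 ≤ t → t ≤ T → (Q t).card = l) ∧
      r * (OPT k T Q : ℝ) + c < (cost T Q (inducedCaches C1 A Q) : ℝ) := by
  set m := k - l + 1
  obtain ⟨U, -, hU⟩ :=
    exists_subset_card_eq (s := (univ : Finset Ω)) (n := k + 1) (by rwa [card_univ])
  obtain ⟨S, hSU, hS⟩ := exists_subset_card_eq (show l - 1 ≤ #U by omega)
  have hUS : #(U \ S) = m + 1 := by rw [card_sdiff_of_subset hSU]; omega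
  choose x hxUS hx using
    exists_mem_sdiff_insert_subset_imp_subset (U := U) (S := S) (card_pos.1 (by omega))
  obtain ⟨Q, hQ⟩ := exists_forall_eq_next_inducedCaches C1 A fun C => insert (x C) S
  have hQl : ∀ t, #(Q t) = l := fun t => by
    rw [hQ, card_insert_of_notMem (mem_sdiff.1 (hxUS _)).2, hS]
    omega
  obtain ⟨N, hN⟩ := exists_nat_forall_le_mul_add_lt (m := (m : ℝ)) (by positivity)
    (by rwa [Nat.cast_add, Nat.cast_sub hlk, Nat.cast_one]) c
  refine ⟨m * N, Q, fun t _ _ => hQl t, ?_⟩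
  have hcost : cost (m * N) Q (inducedCaches C1 A Q) = m * N := by
    refine cost_eq_of_forall_miss fun t ht1 htT hhit => ?_
    have hcard := (hA (m * N) Q fun t _ _ => hQl t).1 t ht1 (by omega)
    rw [hQ] at hhit
    have := card_le_card (hx _ hhit)
    omega
  have hopt : OPT k (m * N) Q ≤ N :=
    (OPT_le_div hU hSU hUS (by omega) fun t => ⟨_, hxUS _, hQ t⟩).trans
      (Nat.mul_div_cancel_left N (by omega)).le
  rw [hcost, Nat.cast_mul]
  exact hN _ hopt

/-- No deterministic online algorithm for file-bundle caching with cache size `k`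
achieves a competitive ratio better than `k - l + 1`. -/
theorem stmt0 [DecidableEq Ω] [Fintype Ω] (l k : ℕ) (hl : 0 < l) (hlk : l ≤ k)
    (hΩ : k + 1 ≤ Fintype.card Ω)
    (C1 : Finset Ω) (hC1 : C1.card = k)
    (A : List (Finset Ω) → Finset Ω)
    (hA : ∀ (T : ℕ) (Q : ℕ → Finset Ω), (∀ t, 1 ≤ t → t ≤ T → (Q t).card = l) →
      IsSchedule k T Q (inducedCaches C1 A Q))
    (r c : ℝ) (hr : r < (k : ℝ) - l + 1) :
    ∃ (T : ℕ) (Q : ℕ → Finset Ω), (∀ t, 1 ≤ t → t ≤ T → (Q t).card = l) ∧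
      r * (OPT k T Q : ℝ) + c < (cost T Q (inducedCaches C1 A Q) : ℝ) :=
  stmt0_general l k hl hlk hΩ C1 A hA r c hr
end

section
/- The LRU algorithm is k-competitive for the file-bundle caching problem: for every query sequence σ whose queries have cardinality l ≤ k and every caching schedule with cache size k for σ that follows the LRU rule, the number of cache misses of that schedule is at most k · OPT_k(σ) + k. -/
variable {Ω : Type*}

/-- The last-use time of page `p` before time `t`: the largest `s` with `1 ≤ s < t`
and `p ∈ Q s`, or `0` if `p` was not requested before time `t`. -/
def lastUse [DecidableEq Ω] (Q : ℕ → Finset Ω) (p : Ω) (t : ℕ) : ℕ :=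
  ((Finset.Ico 1 t).filter fun s => p ∈ Q s).sup id

/-- A caching schedule following the LRU rule: at every cache miss at time `t`, exactly
`|Q t \ C t|` pages are evicted, and every evicted page was used no more recently than
every retained page outside the current query. -/
def IsLRUSchedule [DecidableEq Ω] (k T : ℕ) (Q C : ℕ → Finset Ω) : Prop :=
  IsSchedule k T Q C ∧
  ∀ t, 1 ≤ t → t ≤ T → ¬ Q t ⊆ C t →
    ∃ E ⊆ C t \ Q t, E.card = (Q t \ C t).card ∧ C (t + 1) = (C t ∪ Q t) \ E ∧
      ∀ p ∈ E, ∀ q ∈ (C t \ Q t) \ E, lastUse Q p t ≤ lastUse Q q t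

/-!
Fix any schedule `C'` and cut the time line just before each miss of `C'`. On a block
starting at a miss `r` of `C'` (or at time 1), `C'` makes no further misses, so all queries
of the block lie in the single `k`-set `C' (r + 1)`. On such a block LRU misses at most `k`
times: a page requested in the block is never evicted again within it, because evicting it
would leave only pages requested in the block, i.e. the cache would be `C' (r + 1)` itself,
which contains that page. So the pages LRU fetches at its misses in the block are distinct
elements of `C' (r + 1)`.
-/

open Finset

def missTimes [DecidableEq Ω] (Q C : ℕ → Finset Ω) (a b : ℕ) : Finset ℕ :=
  (Icc a b).filter fun t => ¬ Q t ⊆ C t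

section Caching

variable [DecidableEq Ω] {k T : ℕ} {Q C : ℕ → Finset Ω}

theorem card_missTimes_add {a m b : ℕ} (ham : a ≤ m + 1) (hmb : m ≤ b) :
    #(missTimes Q C a m) + #(missTimes Q C (m + 1) b) = #(missTimes Q C a b) := by
  rw [← card_union_of_disjoint, missTimes, missTimes, missTimes, ← filter_union]
  · congr 2
    ext t
    simp only [mem_union, mem_Icc]
    omega
  · exact disjoint_filter_filter (disjoint_left.2 fun t h₁ h₂ => by
      simp only [mem_Icc] at h₁ h₂
      omega)

theorem le_lastUse {p : Ω} {s t : ℕ} (hs : 1 ≤ s) (hst : s < t) (hp : p ∈ Q s) :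
    s ≤ lastUse Q p t :=
  le_sup (f := id) (mem_filter.2 ⟨mem_Ico.2 ⟨hs, hst⟩, hp⟩)

theorem mem_lastUse_of_pos {p : Ω} {t : ℕ} (h : 1 ≤ lastUse Q p t) :
    p ∈ Q (lastUse Q p t) ∧ lastUse Q p t < t := by
  rcases ((Ico 1 t).filter fun s => p ∈ Q s).eq_empty_or_nonempty with h₀ | hne
  · simp [lastUse, h₀] at h
  · obtain ⟨s, hs, hsup⟩ := exists_mem_eq_sup _ hne id
    rw [lastUse, hsup]
    simp only [mem_filter, mem_Ico] at hs
    exact ⟨hs.2, hs.1.2⟩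

theorem IsSchedule.query_subset_succ (hC : IsSchedule k T Q C) {t : ℕ} (ht : 1 ≤ t)
    (htT : t ≤ T) : Q t ⊆ C (t + 1) := by
  by_cases hhit : Q t ⊆ C t
  · rwa [(hC.2 t ht htT).1 hhit]
  · exact (hC.2 t ht htT).2 hhit

theorem IsSchedule.eq_of_hits (hC : IsSchedule k T Q C) {r u : ℕ} (hru : r < u)
    (huT : u ≤ T + 1) (hhit : ∀ t, r < t → t < u → Q t ⊆ C t) : C u = C (r + 1) := by
  induction u, hru using Nat.le_induction with
  | base => rfl
  | succ u hru ih =>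
    rw [(hC.2 u (by omega) (by omega)).1 (hhit u hru (by omega)),
      ih (by omega) fun t h₁ h₂ => hhit t h₁ (by omega)]

theorem IsSchedule.query_subset_of_hits (hC : IsSchedule k T Q C) {r b : ℕ} (hb : b ≤ T)
    (hhit : ∀ t, r < t → t ≤ b → Q t ⊆ C t) {u : ℕ} (hu : 1 ≤ u) (hru : r ≤ u)
    (hub : u ≤ b) : Q u ⊆ C (r + 1) := by
  rcases hru.eq_or_lt with rfl | hru
  · exact hC.query_subset_succ hu (hub.trans hb)
  · rw [← hC.eq_of_hits hru (by omega) fun t h₁ h₂ => hhit t h₁ (by omega)]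
    exact hhit u hru hub

theorem IsLRUSchedule.lastUse_le_of_evicted (hC : IsLRUSchedule k T Q C) {t : ℕ}
    (ht : 1 ≤ t) (htT : t ≤ T) {p q : Ω} (hp : p ∈ C t) (hp' : p ∉ C (t + 1))
    (hq : q ∈ C (t + 1)) : q ∈ Q t ∨ lastUse Q p t ≤ lastUse Q q t := by
  have hmiss : ¬ Q t ⊆ C t := fun hhit => hp' ((hC.1.2 t ht htT).1 hhit ▸ hp)
  obtain ⟨E, -, -, hnext, hLRU⟩ := hC.2 t ht htT hmiss
  rw [hnext, mem_sdiff, mem_union] at hp' hq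
  have hpE : p ∈ E := by tauto
  by_cases hqt : q ∈ Q t
  · exact .inl hqt
  · exact .inr (hLRU p hpE q (by simp only [mem_sdiff]; tauto))

theorem IsLRUSchedule.mem_cache_of_mem_query (hC : IsLRUSchedule k T Q C) {a b : ℕ}
    {D : Finset Ω} (ha : 1 ≤ a) (hb : b ≤ T) (hD : #D = k)
    (hQD : ∀ t, a ≤ t → t ≤ b → Q t ⊆ D) {p : Ω} {s : ℕ} (has : a ≤ s) (hp : p ∈ Q s)
    {u : ℕ} (hsu : s < u) (hub : u ≤ b + 1) : p ∈ C u := by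
  induction u, hsu using Nat.le_induction with
  | base => exact hC.1.query_subset_succ (by omega) (by omega) hp
  | succ u hsu ih =>
    have hpu := ih (by omega)
    by_contra hpu'
    have hsub : C (u + 1) ⊆ D := fun q hq => by
      rcases hC.lastUse_le_of_evicted (by omega) (by omega) hpu hpu' hq with hq | hq
      · exact hQD u (by omega) (by omega) hq
      · have hs := le_lastUse (by omega) hsu hp
        obtain ⟨hq', hlt⟩ := mem_lastUse_of_pos (Q := Q) (p := q) (t := u) (by omega)
        exact hQD _ (by omega) (by omega) hq'
    have hD' := eq_of_subset_of_card_le hsub (by rw [hD, hC.1.1 (u + 1) (by omega) (by omega)])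
    exact hpu' (hD' ▸ hQD s has (by omega) hp)

theorem IsLRUSchedule.card_missTimes_le_of_subset (hC : IsLRUSchedule k T Q C) {a b : ℕ}
    {D : Finset Ω} (ha : 1 ≤ a) (hb : b ≤ T) (hD : #D = k)
    (hQD : ∀ t, a ≤ t → t ≤ b → Q t ⊆ D) : #(missTimes Q C a b) ≤ k := by
  have hdisj : ∀ s ∈ missTimes Q C a b, ∀ t ∈ missTimes Q C a b, s < t →
      Disjoint (Q s \ C s) (Q t \ C t) := fun s hs t ht hst => by
    simp only [missTimes, mem_filter, mem_Icc] at hs ht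
    exact disjoint_left.2 fun p hps hpt => (mem_sdiff.1 hpt).2
      (hC.mem_cache_of_mem_query ha hb hD hQD hs.1.1 (mem_sdiff.1 hps).1 hst (by omega))
  calc #(missTimes Q C a b)
      ≤ #((missTimes Q C a b).biUnion fun t => Q t \ C t) := by
        refine card_le_card_biUnion (fun s hs t ht hst => ?_) fun t ht =>
          sdiff_nonempty.2 (mem_filter.1 ht).2
        rcases hst.lt_or_gt with h | h
        · exact hdisj s hs t ht h
        · exact (hdisj t ht s hs h).symm
    _ ≤ #D := card_le_card <| biUnion_subset.2 fun t ht => by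
        simp only [missTimes, mem_filter, mem_Icc] at ht
        exact sdiff_subset.trans (hQD t ht.1.1 ht.1.2)
    _ = k := hD

theorem IsLRUSchedule.card_missTimes_le (hC : IsLRUSchedule k T Q C) {C' : ℕ → Finset Ω}
    (hC' : IsSchedule k T Q C') {b : ℕ} (hb : b ≤ T) :
    #(missTimes Q C 1 b) ≤ k * #(missTimes Q C' 1 b) + k := by
  induction b using Nat.strong_induction_on with
  | _ b ih =>
  rcases (missTimes Q C' 1 b).eq_empty_or_nonempty with hM | hM
  · have hhit : ∀ t, 0 < t → t ≤ b → Q t ⊆ C' t := fun t h₁ h₂ => by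
      by_contra h
      exact (eq_empty_iff_forall_notMem.1 hM) t (mem_filter.2 ⟨mem_Icc.2 ⟨h₁, h₂⟩, h⟩)
    rw [hM, card_empty, mul_zero, zero_add]
    exact hC.card_missTimes_le_of_subset le_rfl hb (hC'.1 1 le_rfl (by omega))
      fun t h₁ h₂ => hC'.query_subset_of_hits hb hhit h₁ t.zero_le h₂
  · have hr := max'_mem _ hM
    set r := (missTimes Q C' 1 b).max' hM
    have hhit : ∀ t, r < t → t ≤ b → Q t ⊆ C' t := fun t h₁ h₂ => by
      by_contra h
      exact h₁.not_ge (le_max' _ t (mem_filter.2 ⟨mem_Icc.2 ⟨by omega, h₂⟩, h⟩))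
    simp only [missTimes, mem_filter, mem_Icc] at hr
    obtain ⟨m, hm⟩ : ∃ m, r = m + 1 := ⟨r - 1, by omega⟩
    have hlast : 1 ≤ #(missTimes Q C' (m + 1) b) :=
      card_pos.2 ⟨r, mem_filter.2 ⟨mem_Icc.2 ⟨by omega, hr.1.2⟩, hr.2⟩⟩
    calc #(missTimes Q C 1 b)
        = #(missTimes Q C 1 m) + #(missTimes Q C (m + 1) b) :=
          (card_missTimes_add (by omega) (by omega)).symm
      _ ≤ (k * #(missTimes Q C' 1 m) + k) + k :=
          add_le_add (ih m (by omega) (by omega))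
            (hC.card_missTimes_le_of_subset (by omega) hb
              (hC'.1 (r + 1) (by omega) (by omega))
              fun t h₁ h₂ => hC'.query_subset_of_hits hb hhit (by omega) (by omega) h₂)
      _ ≤ k * (#(missTimes Q C' 1 m) + #(missTimes Q C' (m + 1) b)) + k := by
          rw [mul_add]
          linarith [Nat.le_mul_of_pos_right k hlast]
      _ = k * #(missTimes Q C' 1 b) + k := by
          rw [card_missTimes_add (by omega) (by omega)]

end Caching

theorem stmt1_general [DecidableEq Ω] (k T : ℕ)
    (Q C : ℕ → Finset Ω)
    (hC : IsLRUSchedule k T Q C) :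
    cost T Q C ≤ k * OPT k T Q + k := by
  obtain ⟨C', hC', hOPT⟩ : ∃ C', IsSchedule k T Q C' ∧ cost T Q C' = OPT k T Q :=
    Nat.sInf_mem (s := {n | ∃ C', IsSchedule k T Q C' ∧ cost T Q C' = n}) ⟨_, C, hC.1, rfl⟩
  rw [← hOPT]
  exact hC.card_missTimes_le hC' le_rfl

/-- LRU is `k`-competitive for the file-bundle caching problem. -/
theorem stmt1 [DecidableEq Ω] [Fintype Ω] (l k T : ℕ) (hl : l ≤ k)
    (hΩ : k ≤ Fintype.card Ω)
    (Q C : ℕ → Finset Ω)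
    (hQ : ∀ t, 1 ≤ t → t ≤ T → (Q t).card = l)
    (hC : IsLRUSchedule k T Q C) :
    cost T Q C ≤ k * OPT k T Q + k :=
  stmt1_general k T Q C hC
end

section
/- For every query sequence σ whose queries have cardinality l, every caching schedule with cache size k for σ, and all times a < b: if Q_a ⊆ C_{a+1} (the cache contains query Q_a after serving it) and the queries Q_a, Q_{a+1}, …, Q_b collectively request at least k+1 distinct pages (|⋃_{t=a}^{b} Q_t| ≥ k+1), then the schedule incurs at least one cache miss at some time t with a < t ≤ b. -/
variable {Ω : Type*}

/-- If the cache contains `Q a` after serving it, and the queries `Q a, …, Q b`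
collectively request at least `k + 1` distinct pages, then the schedule incurs at
least one cache miss at some time `t` with `a < t ≤ b`. -/
theorem stmt3 [DecidableEq Ω] (l k T : ℕ) (Q C : ℕ → Finset Ω)
    (hQ : ∀ t, 1 ≤ t → t ≤ T → (Q t).card = l)
    (hC : IsSchedule k T Q C)
    (a b : ℕ) (ha : 1 ≤ a) (hab : a < b) (hb : b ≤ T)
    (hQa : Q a ⊆ C (a + 1))
    (hmany : k + 1 ≤ ((Finset.Icc a b).biUnion Q).card) :
    ∃ t, a < t ∧ t ≤ b ∧ ¬ Q t ⊆ C t := by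
  by_contra hcon
  push_neg at hcon
  -- all caches from a+1 to b equal C (a+1)
  have hstay : ∀ t, a + 1 ≤ t → t ≤ b → C t = C (a + 1) := by
    intro t ht htb
    induction t with
    | zero => omega
    | succ s ih =>
      rcases Nat.lt_or_ge (a + 1) (s + 1) with hlt | hge
      · have hs1 : a + 1 ≤ s := by omega
        have hsb : s ≤ b := by omega
        have hcs : C s = C (a + 1) := ih hs1 hsb
        have hhit : Q s ⊆ C s := hcon s (by omega) (by omega)
        have := (hC.2 s (by omega) (by omega)).1 hhit
        rw [this, hcs]
      · have : s + 1 = a + 1 := by omega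
        rw [this]
  have hsub : (Finset.Icc a b).biUnion Q ⊆ C (a + 1) := by
    intro x hx
    rw [Finset.mem_biUnion] at hx
    obtain ⟨t, ht, hxt⟩ := hx
    rw [Finset.mem_Icc] at ht
    rcases eq_or_lt_of_le ht.1 with h | h
    · exact hQa (h ▸ hxt)
    · have hct : C t = C (a + 1) := hstay t (by omega) ht.2
      have := hcon t h ht.2
      exact hct ▸ this hxt
  have hcard := Finset.card_le_card hsub
  have : (C (a + 1)).card = k := hC.1 (a + 1) (by omega) (by omega)
  omega
end

section
/- For every query sequence σ whose queries have cardinality l ≤ k, every caching schedule with cache size k for σ that follows the LRU rule, and every contiguous block of times a ≤ t ≤ b such that the queries of the block collectively request at most k distinct pages (|⋃_{t=a}^{b} Q_t| ≤ k), the schedule incurs at most k cache misses during the block. In particular, LRU makes at most k cache misses during each phase of the phase partition of σ. -/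
variable {Ω : Type*}

/-- During any contiguous block of times whose queries collectively request at most `k`
distinct pages, an LRU schedule with cache size `k` incurs at most `k` cache misses.
In particular, LRU makes at most `k` cache misses during each phase. -/
theorem stmt4 [DecidableEq Ω] (l k T : ℕ) (hl : l ≤ k)
    (Q C : ℕ → Finset Ω)
    (hQ : ∀ t, 1 ≤ t → t ≤ T → (Q t).card = l)
    (hC : IsLRUSchedule k T Q C)
    (a b : ℕ) (ha : 1 ≤ a) (hab : a ≤ b) (hb : b ≤ T)
    (hfew : ((Finset.Icc a b).biUnion Q).card ≤ k) :
    ((Finset.Icc a b).filter fun t => ¬ Q t ⊆ C t).card ≤ k := by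
  classical
  obtain ⟨⟨hcard, hsched⟩, hlru⟩ := hC
  set U := (Finset.Icc a b).biUnion Q with hU
  -- key: a page requested at time t stays in the cache through time b
  have key : ∀ t t', a ≤ t → t < t' → t' ≤ b → ∀ p ∈ Q t, p ∈ C t' := by
    intro t t' hat htt' ht'b p hp
    have h1t : 1 ≤ t := le_trans ha hat
    have htT : t ≤ T := le_trans (le_trans (Nat.le_of_lt htt') ht'b) hb
    have hpU : p ∈ U := Finset.mem_biUnion.mpr
      ⟨t, Finset.mem_Icc.mpr ⟨hat, le_trans (Nat.le_of_lt htt') ht'b⟩, hp⟩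
    have main : ∀ s, t + 1 ≤ s → s ≤ b → p ∈ C s := by
      intro s hs hsb
      induction s, hs using Nat.le_induction with
      | base =>
        by_cases hhit : Q t ⊆ C t
        · rw [(hsched t h1t htT).1 hhit]; exact hhit hp
        · exact (hsched t h1t htT).2 hhit hp
      | succ s hs ih =>
        have hsb' : s ≤ b := le_trans (Nat.le_succ s) hsb
        have hpCs : p ∈ C s := ih hsb'
        have h1s : 1 ≤ s := by omega
        have hsT : s ≤ T := le_trans hsb' hb
        by_cases hhit : Q s ⊆ C s
        · rw [(hsched s h1s hsT).1 hhit]; exact hpCs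
        · obtain ⟨E, hE, hEcard, hCs1, hlast⟩ := hlru s h1s hsT hhit
          by_contra hpnot
          -- p was evicted at time s
          have hpE : p ∈ E := by
            by_contra hpE
            exact hpnot (hCs1 ▸ Finset.mem_sdiff.mpr
              ⟨Finset.mem_union_left _ hpCs, hpE⟩)
          have hlp : t ≤ lastUse Q p s := by
            have : t ∈ (Finset.Ico 1 s).filter fun r => p ∈ Q r :=
              Finset.mem_filter.mpr ⟨Finset.mem_Ico.mpr ⟨h1t, lt_of_lt_of_le (Nat.lt_succ_self t) hs⟩, hp⟩
            exact Finset.le_sup (f := id) this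
          -- all of C (s+1) lies in U
          have hsub : C (s + 1) ⊆ U := by
            intro x hx
            rw [hCs1] at hx
            obtain ⟨hx1, hx2⟩ := Finset.mem_sdiff.mp hx
            by_cases hxQ : x ∈ Q s
            · exact Finset.mem_biUnion.mpr
                ⟨s, Finset.mem_Icc.mpr ⟨le_trans hat (le_trans (Nat.le_succ t) hs), hsb'⟩, hxQ⟩
            · have hxR : x ∈ (C s \ Q s) \ E := by
                rcases Finset.mem_union.mp hx1 with h | h
                · exact Finset.mem_sdiff.mpr ⟨Finset.mem_sdiff.mpr ⟨h, hxQ⟩, hx2⟩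
                · exact absurd h hxQ
              have hlq : t ≤ lastUse Q x s := le_trans hlp (hlast p hpE x hxR)
              have hne : ((Finset.Ico 1 s).filter fun r => x ∈ Q r).Nonempty := by
                by_contra hne
                rw [Finset.not_nonempty_iff_eq_empty] at hne
                have : lastUse Q x s = 0 := by
                  unfold lastUse; rw [hne]; rfl
                omega
              obtain ⟨r, hr, hrsup⟩ := Finset.exists_mem_eq_sup _ hne id
              have hr' := Finset.mem_filter.mp hr
              have hrIco := Finset.mem_Ico.mp hr'.1
              have hra : a ≤ r := by
                have : lastUse Q x s = r := hrsup
                omega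
              exact Finset.mem_biUnion.mpr
                ⟨r, Finset.mem_Icc.mpr ⟨hra, le_trans (Nat.le_of_lt hrIco.2) hsb'⟩, hr'.2⟩
          have hins : insert p (C (s + 1)) ⊆ U := by
            intro x hx
            rcases Finset.mem_insert.mp hx with h | h
            · exact h ▸ hpU
            · exact hsub h
          have hcard1 : (C (s + 1)).card = k := hcard (s + 1) (Nat.le_succ_of_le h1s) (by omega)
          have : k + 1 ≤ U.card := by
            have := Finset.card_le_card hins
            rwa [Finset.card_insert_of_notMem hpnot, hcard1] at this
          omega
    exact main t' (Nat.succ_le_of_lt htt') ht'b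
  -- now count misses injectively
  set M := (Finset.Icc a b).filter fun t => ¬ Q t ⊆ C t with hM
  rcases M.eq_empty_or_nonempty with hMe | ⟨t0, ht0⟩
  · rw [hMe]; simp
  · obtain ⟨p0, hp0, _⟩ := Finset.not_subset.mp (Finset.mem_filter.mp ht0).2
    haveI : Nonempty Ω := ⟨p0⟩
    have hsel : ∀ t ∈ M, ∃ p, p ∈ Q t ∧ p ∉ C t := by
      intro t ht
      exact Finset.not_subset.mp (Finset.mem_filter.mp ht).2
    set f : ℕ → Ω := fun t =>
      if h : ∃ p, p ∈ Q t ∧ p ∉ C t then h.choose else Classical.arbitrary Ω with hf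
    have hfQ : ∀ t ∈ M, f t ∈ Q t ∧ f t ∉ C t := by
      intro t ht
      have h := hsel t ht
      simp only [hf, dif_pos h]
      exact h.choose_spec
    have : M.card ≤ U.card := by
      apply Finset.card_le_card_of_injOn f
      · intro t ht
        have htI := Finset.mem_Icc.mp (Finset.mem_filter.mp ht).1
        exact Finset.mem_biUnion.mpr ⟨t, (Finset.mem_filter.mp ht).1, (hfQ t ht).1⟩
      · intro t ht t' ht' hff
        by_contra hne
        have htI := Finset.mem_Icc.mp (Finset.mem_filter.mp ht).1
        have ht'I := Finset.mem_Icc.mp (Finset.mem_filter.mp ht').1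
        rcases lt_or_gt_of_ne hne with h | h
        · exact (hfQ t' ht').2 (key t t' htI.1 h ht'I.2 (f t') (hff ▸ (hfQ t ht).1))
        · exact (hfQ t ht).2 (key t' t ht'I.1 h htI.2 (f t) (hff ▸ (hfQ t' ht').1))
    omega
end

section
/- Consider the query-wise marking algorithm with cache size k running on a query sequence σ whose queries have cardinality l ≤ k, and fix a phase of the phase partition of σ. Let m be the number of new pages of that phase, i.e., pages requested during the phase that were not requested during the preceding phase. Then the expected number of cache misses incurred by the query-wise marking algorithm during that phase is at most m + m · ∑_{ℓ=m+1}^{k} 1/ℓ. -/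
/-!
Within a phase no mark is cleared. So once the pages `M` requested so far in the phase have been
served, the marked pages are exactly `M`, and the cache is `O ∪ M` minus a set `E` of `|M \ O|`
pages of `O \ M`, where `O` is the page set of the preceding phase. By induction along the phase,
`E` is uniformly distributed: a miss evicts a uniformly random set of unmarked pages, and a
uniform subset completed by a uniformly random extension is again uniform.

With `m` new pages and `u = |O \ M|`, the potential `(m - |M \ O|) + m ∑_{ℓ=m+1}^{u} 1/ℓ` bounds
the expected number of remaining misses. A query containing a new page costs at most `1` and
lowers the first term by at least `1`. Any other query misses only if it meets `E`; if it contains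
`r` pages of `O \ M`, this has probability at most `|M \ O| r / u ≤ m ∑_{ℓ=u-r+1}^{u} 1/ℓ`, which
is what the second term loses as `u` drops to `u - r`.
-/

open scoped Classical

variable {Ω : Type*}

/-- Expected number of cache misses of the query-wise marking algorithm serving queries
`Q t, Q (t+1), …, Q T`, starting with cache content `C` and marked set `M`.  At a time
`t` with `reset t` the marks are first cleared.  On a hit all pages of the query are
marked; on a miss a uniformly random set of `|Q t \ C|` unmarked cached pages outside
the query is evicted, the query is inserted, and its pages are marked. -/
noncomputable def markExp [DecidableEq Ω] (Q : ℕ → Finset Ω) (reset : ℕ → Prop)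
    (T t : ℕ) (C M : Finset Ω) : ℝ :=
  if ht : t ≤ T then
    let M₀ : Finset Ω := if reset t then ∅ else M
    if Q t ⊆ C then markExp Q reset T (t + 1) C (M₀ ∪ Q t)
    else
      let cand := ((C \ Q t) \ M₀).powersetCard ((Q t \ C).card)
      1 + (∑ E ∈ cand, markExp Q reset T (t + 1) ((C ∪ Q t) \ E) (M₀ ∪ Q t)) /
        (cand.card : ℝ)
  else 0
termination_by T + 1 - t
decreasing_by all_goals omega

open Finset
open scoped BigOperators

lemma sub_div_le_sum_Ioc_one_div (u' u : ℕ) :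
    ((u - u' : ℕ) : ℝ) / u ≤ ∑ ℓ ∈ Ioc u' u, (1 : ℝ) / ℓ := by
  calc ((u - u' : ℕ) : ℝ) / u = ∑ ℓ ∈ Ioc u' u, (1 : ℝ) / u := by
        rw [sum_const, Nat.card_Ioc, nsmul_eq_mul]
        ring
    _ ≤ _ := by
        refine sum_le_sum fun ℓ hℓ => ?_
        obtain ⟨h1, h2⟩ := mem_Ioc.1 hℓ
        exact one_div_le_one_div_of_le (Nat.cast_pos.2 (by omega)) (Nat.cast_le.2 h2)

namespace Finset

variable [DecidableEq Ω]

lemma sum_filter_powersetCard_subset {M : Type*} [AddCommMonoid M] (f : Finset Ω → M)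
    {s t : Finset Ω} {n : ℕ} (hst : s ⊆ t) (hsn : #s ≤ n) :
    ∑ E ∈ t.powersetCard n with s ⊆ E, f E =
      ∑ E ∈ (t \ s).powersetCard (n - #s), f (E ∪ s) := by
  rw [filter_powersetCard_subset s t n hst hsn, sum_image]
  intro a ha b hb hab
  have hda := disjoint_of_subset_left (mem_powersetCard.1 ha).1 disjoint_sdiff_self_left
  have hdb := disjoint_of_subset_left (mem_powersetCard.1 hb).1 disjoint_sdiff_self_left
  rw [← union_sdiff_cancel_right hda, ← union_sdiff_cancel_right hdb]
  exact congrArg (· \ s) hab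

lemma filter_powersetCard_subset_eq_powersetCard {V E : Finset Ω} (hEV : E ⊆ V) (j : ℕ) :
    {S ∈ V.powersetCard j | S ⊆ E} = E.powersetCard j := by
  ext S
  simp only [mem_filter, mem_powersetCard]
  exact ⟨fun h => ⟨h.2, h.1.2⟩, fun h => ⟨⟨h.1.trans hEV, h.2⟩, h.1⟩⟩

lemma sum_powersetCard_sum_powersetCard_sdiff {M : Type*} [AddCommMonoid M]
    (f : Finset Ω → M) (V : Finset Ω) {j p : ℕ} (hjp : j ≤ p) :
    ∑ S ∈ V.powersetCard j, ∑ E ∈ (V \ S).powersetCard (p - j), f (E ∪ S) =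
      p.choose j • ∑ E ∈ V.powersetCard p, f E := by
  calc _ = ∑ S ∈ V.powersetCard j, ∑ E ∈ V.powersetCard p with S ⊆ E, f E := by
        refine sum_congr rfl fun S hS => ?_
        obtain ⟨hSV, rfl⟩ := mem_powersetCard.1 hS
        exact (sum_filter_powersetCard_subset f hSV hjp).symm
    _ = ∑ E ∈ V.powersetCard p, ∑ S ∈ V.powersetCard j with S ⊆ E, f E := by
        simp_rw [sum_filter]
        exact sum_comm
    _ = _ := by
        rw [smul_sum]
        refine sum_congr rfl fun E hE => ?_
        obtain ⟨hEV, rfl⟩ := mem_powersetCard.1 hE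
        rw [sum_const, filter_powersetCard_subset_eq_powersetCard hEV, card_powersetCard]

lemma expect_powersetCard_expect_powersetCard_sdiff (f : Finset Ω → ℝ) (V : Finset Ω)
    {j p : ℕ} (hjp : j ≤ p) :
    𝔼 S ∈ V.powersetCard j, 𝔼 E ∈ (V \ S).powersetCard (p - j), f (E ∪ S) =
      𝔼 E ∈ V.powersetCard p, f E := by
  have inner : ∀ S ∈ V.powersetCard j, 𝔼 E ∈ (V \ S).powersetCard (p - j), f (E ∪ S) =
      (∑ E ∈ (V \ S).powersetCard (p - j), f (E ∪ S)) / (#V - j).choose (p - j) := by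
    intro S hS
    obtain ⟨hSV, rfl⟩ := mem_powersetCard.1 hS
    rw [expect_eq_sum_div_card, card_powersetCard, card_sdiff_of_subset hSV]
  have hpos : ∀ {a b : ℕ}, b ≤ a → (a.choose b : ℝ) ≠ 0 := fun h =>
    Nat.cast_ne_zero.2 (Nat.choose_pos h).ne'
  rw [expect_congr rfl inner, expect_eq_sum_div_card, ← sum_div,
    sum_powersetCard_sum_powersetCard_sdiff f V hjp, expect_eq_sum_div_card, card_powersetCard,
    card_powersetCard, nsmul_eq_mul, div_div, ← Nat.cast_mul, mul_comm _ ((#V).choose j),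
    ← Nat.choose_mul hjp, Nat.cast_mul, mul_comm ((#V).choose p : ℝ),
    mul_div_mul_left _ _ (hpos hjp)]

lemma sum_powersetCard_apply_sdiff {M : Type*} [AddCommMonoid M] (g : Finset Ω → M)
    (U B : Finset Ω) (q : ℕ) :
    ∑ E ∈ U.powersetCard q, g (E \ B) =
      ∑ ij ∈ antidiagonal q,
        (#(U ∩ B)).choose ij.2 • ∑ S ∈ (U \ B).powersetCard ij.1, g S := by
  have hsplit : ∀ S T : Finset Ω, S ⊆ U \ B → T ⊆ U ∩ B →
      (S ∪ T) \ B = S ∧ (S ∪ T) ∩ B = T := by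
    intro S T hS hT
    constructor <;> ext x <;> grind
  rw [← sum_fiberwise_of_maps_to (g := fun E => (#(E \ B), #(E ∩ B))) (t := antidiagonal q)
    fun E hE => by simp [← (mem_powersetCard.1 hE).2, card_sdiff_add_card_inter]]
  refine sum_congr rfl fun ⟨i, j⟩ hij => ?_
  rw [HasAntidiagonal.mem_antidiagonal] at hij
  rw [← card_powersetCard, ← sum_const, ← sum_comm, ← sum_product']
  refine sum_nbij' (fun E => (E \ B, E ∩ B)) (fun x => x.1 ∪ x.2) ?_ ?_ ?_ ?_ fun _ _ => rfl
  · intro E hE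
    simp only [mem_filter, mem_powersetCard, Prod.mk.injEq] at hE
    obtain ⟨⟨hEU, -⟩, hi, hj⟩ := hE
    simp only [mem_product, mem_powersetCard]
    exact ⟨⟨sdiff_subset_sdiff hEU le_rfl, hi⟩, inter_subset_inter hEU le_rfl, hj⟩
  · rintro ⟨S, T⟩ hST
    simp only [mem_product, mem_powersetCard] at hST
    obtain ⟨⟨hS, hSc⟩, hT, hTc⟩ := hST
    obtain ⟨hSB, hTB⟩ := hsplit S T hS hT
    simp only [mem_filter, mem_powersetCard, hSB, hTB, hSc, hTc]
    refine ⟨⟨union_subset (hS.trans sdiff_subset) (hT.trans inter_subset_left), ?_⟩,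
      trivial⟩
    have hST : Disjoint S T :=
      disjoint_of_subset_left hS (disjoint_of_subset_right hT (disjoint_sdiff_inter U B))
    rw [card_union_of_disjoint hST, hSc, hTc, hij]
  · intro E _
    exact sdiff_union_inter E B
  · rintro ⟨S, T⟩ hST
    simp only [mem_product, mem_powersetCard] at hST
    obtain ⟨hSB, hTB⟩ := hsplit S T hST.1.1 hST.2.1
    simp only [hSB, hTB]

theorem expect_powersetCard_expect_powersetCard_sdiff_union (f : Finset Ω → ℝ)
    (U B : Finset Ω) {q p : ℕ} (hqp : q ≤ p) (hp : p ≤ #(U \ B)) :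
    𝔼 E ∈ U.powersetCard q,
        𝔼 E₂ ∈ ((U \ B) \ (E \ B)).powersetCard (p - #(E \ B)), f (E₂ ∪ E \ B) =
      𝔼 E ∈ (U \ B).powersetCard p, f E := by
  set g : Finset Ω → ℝ :=
    fun S => 𝔼 E₂ ∈ ((U \ B) \ S).powersetCard (p - #S), f (E₂ ∪ S)
  have hg : ∀ i ≤ q, ∑ S ∈ (U \ B).powersetCard i, g S =
      (#(U \ B)).choose i • 𝔼 E ∈ (U \ B).powersetCard p, f E := by
    intro i hi
    rw [← card_smul_expect, card_powersetCard,
      ← expect_powersetCard_expect_powersetCard_sdiff f _ (hi.trans hqp)]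
    congr 1
    refine expect_congr rfl fun S hS => ?_
    obtain ⟨-, rfl⟩ := mem_powersetCard.1 hS
    rfl
  have hU : (U.powersetCard q).card ≠ 0 := by
    rw [card_powersetCard]
    exact (Nat.choose_pos (hp.trans (card_le_card sdiff_subset) |>.trans' hqp)).ne'
  refine nsmul_right_injective hU ?_
  beta_reduce
  rw [card_smul_expect, sum_powersetCard_apply_sdiff g U B q, card_powersetCard,
    ← card_sdiff_add_card_inter U B, Nat.add_choose_eq, sum_smul]
  refine sum_congr rfl fun ij hij => ?_
  rw [hg ij.1 (Finset.HasAntidiagonal.antidiagonal.fst_le hij), smul_smul, mul_comm]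

lemma expect_powersetCard_ite_mem {U : Finset Ω} {x : Ω} (hx : x ∈ U) {q : ℕ}
    (hq : q ≤ #U) :
    𝔼 E ∈ U.powersetCard q, (if x ∈ E then 1 else 0 : ℝ) = q / #U := by
  obtain _ | r := q
  · simp
  obtain ⟨u, hu⟩ : ∃ u, #U = u + 1 := Nat.exists_eq_add_one.2 (card_pos.2 ⟨x, hx⟩)
  have hmem : ∀ E : Finset Ω, x ∈ E ↔ {x} ⊆ E := fun E => singleton_subset_iff.symm
  rw [expect_eq_sum_div_card, sum_boole]
  simp_rw [hmem]
  rw [card_filter_powersetCard_subset _ _ _ (singleton_subset_iff.2 hx) (by simp),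
    card_powersetCard, card_singleton, hu, Nat.add_sub_cancel, Nat.add_sub_cancel]
  have hpos : ((u + 1).choose (r + 1) : ℝ) ≠ 0 :=
    Nat.cast_ne_zero.2 (Nat.choose_pos (by omega)).ne'
  rw [div_eq_div_iff hpos (by positivity)]
  exact_mod_cast (mul_comm _ _).trans ((Nat.add_one_mul_choose_eq u r).trans (mul_comm _ _))

theorem expect_powersetCard_ite_disjoint_le (U B : Finset Ω) (q : ℕ) :
    𝔼 E ∈ U.powersetCard q, (if Disjoint E B then 0 else 1 : ℝ) ≤ q * #(U ∩ B) / #U := by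
  rcases lt_or_ge #U q with hq | hq
  · rw [powersetCard_eq_empty.2 hq, expect_empty]
    positivity
  calc _ ≤ 𝔼 E ∈ U.powersetCard q, ∑ x ∈ U ∩ B, (if x ∈ E then 1 else 0 : ℝ) := by
        refine expect_le_expect fun E hE => ?_
        split_ifs with h
        · positivity
        · obtain ⟨x, hxE, hxB⟩ := not_disjoint_iff.1 h
          have hx : x ∈ U ∩ B := mem_inter.2 ⟨(mem_powersetCard.1 hE).1 hxE, hxB⟩
          refine le_trans ?_ (single_le_sum (fun _ _ => by positivity) hx)
          simp [hxE]
    _ = ∑ x ∈ U ∩ B, (q / #U : ℝ) := by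
        rw [expect_sum_comm]
        exact sum_congr rfl fun x hx => expect_powersetCard_ite_mem (mem_inter.1 hx).1 hq
    _ = _ := by
        rw [sum_const, nsmul_eq_mul]
        ring

end Finset

section Marking

variable [DecidableEq Ω] (Q : ℕ → Finset Ω) (T : ℕ)

lemma markExp_of_lt {t : ℕ} (ht : T < t) (C M : Finset Ω) :
    markExp Q (fun _ => False) T t C M = 0 := by
  rw [markExp, dif_neg (not_le.2 ht)]

-- A hit is the case `#(Q t \ C) = 0`, where the average runs over `{∅}` only.
lemma markExp_of_le {t : ℕ} (ht : t ≤ T) (C M : Finset Ω) :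
    markExp Q (fun _ => False) T t C M = (if Q t ⊆ C then 0 else 1) +
      𝔼 E ∈ ((C \ Q t) \ M).powersetCard #(Q t \ C),
        markExp Q (fun _ => False) T (t + 1) ((C ∪ Q t) \ E) (M ∪ Q t) := by
  rw [markExp, dif_pos ht]
  simp only [if_false]
  split_ifs with hit
  · rw [sdiff_eq_empty_iff_subset.2 hit, card_empty, powersetCard_zero, expect_singleton,
      sdiff_empty, union_eq_left.2 hit, zero_add]
  · rw [expect_eq_sum_div_card]

lemma markExp_sdiff_of_mem_powersetCard {t : ℕ} (ht : t ≤ T) {O M E : Finset Ω}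
    (hE : E ∈ (O \ M).powersetCard #(M \ O)) :
    markExp Q (fun _ => False) T t ((O ∪ M) \ E) M = (if Q t ⊆ (O ∪ M) \ E then 0 else 1) +
      𝔼 E₂ ∈ (((O \ M) \ Q t) \ (E \ Q t)).powersetCard (#((M ∪ Q t) \ O) - #(E \ Q t)),
        markExp Q (fun _ => False) T (t + 1) ((O ∪ (M ∪ Q t)) \ (E₂ ∪ E \ Q t))
          (M ∪ Q t) := by
  obtain ⟨hEU, hEc⟩ := mem_powersetCard.1 hE
  have hcand : (((O ∪ M) \ E) \ Q t) \ M = ((O \ M) \ Q t) \ (E \ Q t) := by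
    ext x
    grind
  have hmiss : #(Q t \ ((O ∪ M) \ E)) = #((M ∪ Q t) \ O) - #(E \ Q t) := by
    have h₁ : Q t \ ((O ∪ M) \ E) = Q t \ (O ∪ M) ∪ Q t ∩ E := by
      ext x
      grind
    have h₂ : (M ∪ Q t) \ O = M \ O ∪ Q t \ (O ∪ M) := by
      ext x
      grind
    have h₁' : Disjoint (Q t \ (O ∪ M)) (Q t ∩ E) := by
      rw [disjoint_left]
      grind
    have h₂' : Disjoint (M \ O) (Q t \ (O ∪ M)) := by
      rw [disjoint_left]
      grind
    rw [h₁, h₂, card_union_of_disjoint h₁', card_union_of_disjoint h₂', ← hEc,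
      ← card_sdiff_add_card_inter E (Q t), inter_comm]
    omega
  have hcache :
      ∀ E₂, ((O ∪ M) \ E ∪ Q t) \ E₂ = (O ∪ (M ∪ Q t)) \ (E₂ ∪ E \ Q t) := by
    intro E₂
    ext x
    grind
  simp_rw [markExp_of_le Q T ht, hcand, hmiss, hcache]

theorem expect_markExp_sdiff_eq {t : ℕ} (ht : t ≤ T) (O M : Finset Ω)
    (hM : #((M ∪ Q t) \ O) ≤ #(O \ (M ∪ Q t))) :
    𝔼 E ∈ (O \ M).powersetCard #(M \ O), markExp Q (fun _ => False) T t ((O ∪ M) \ E) M =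
      𝔼 E ∈ (O \ M).powersetCard #(M \ O), (if Q t ⊆ (O ∪ M) \ E then 0 else 1 : ℝ) +
      𝔼 E ∈ (O \ (M ∪ Q t)).powersetCard #((M ∪ Q t) \ O),
        markExp Q (fun _ => False) T (t + 1) ((O ∪ (M ∪ Q t)) \ E) (M ∪ Q t) := by
  have hq : #(M \ O) ≤ #((M ∪ Q t) \ O) :=
    card_le_card (sdiff_subset_sdiff subset_union_left le_rfl)
  have hU : (O \ M) \ Q t = O \ (M ∪ Q t) := by rw [Finset.sdiff_sdiff_left', sdiff_union_distrib]
  rw [expect_congr rfl fun E hE => markExp_sdiff_of_mem_powersetCard Q T ht hE,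
    expect_add_distrib, ← hU]
  congr 1
  exact expect_powersetCard_expect_powersetCard_sdiff_union
    (fun E => markExp Q (fun _ => False) T (t + 1) ((O ∪ (M ∪ Q t)) \ E) (M ∪ Q t))
    (O \ M) (Q t) hq (hU ▸ hM)

theorem expect_miss_add_le (O M B : Finset Ω) {m : ℕ} (hq : #((M ∪ B) \ O) ≤ m)
    (hu : m ≤ #(O \ (M ∪ B))) :
    𝔼 E ∈ (O \ M).powersetCard #(M \ O), (if B ⊆ (O ∪ M) \ E then 0 else 1 : ℝ) +
        (((m - #((M ∪ B) \ O) : ℕ) : ℝ) +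
          m * ∑ ℓ ∈ Icc (m + 1) #(O \ (M ∪ B)), (1 : ℝ) / ℓ) ≤
      ((m - #(M \ O) : ℕ) : ℝ) + m * ∑ ℓ ∈ Icc (m + 1) #(O \ M), (1 : ℝ) / ℓ := by
  have hU : O \ (M ∪ B) = (O \ M) \ B := by rw [Finset.sdiff_sdiff_left', sdiff_union_distrib]
  have hnew : #((M ∪ B) \ O) = #(M \ O) + #(B \ (O ∪ M)) := by
    rw [← card_union_of_disjoint (by rw [disjoint_left]; grind)]
    congr 1
    ext x
    grind
  have hUU : #(O \ (M ∪ B)) ≤ #(O \ M) :=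
    card_le_card (sdiff_subset_sdiff le_rfl subset_union_left)
  have hsplit : ∑ ℓ ∈ Icc (m + 1) #(O \ M), (1 : ℝ) / ℓ =
      ∑ ℓ ∈ Icc (m + 1) #(O \ (M ∪ B)), (1 : ℝ) / ℓ +
        ∑ ℓ ∈ Ioc #(O \ (M ∪ B)) #(O \ M), (1 : ℝ) / ℓ := by
    rw [Icc_add_one_left_eq_Ioc, Icc_add_one_left_eq_Ioc, sum_Ioc_consecutive _ hu hUU]
  have htail : 0 ≤ (m : ℝ) * ∑ ℓ ∈ Ioc #(O \ (M ∪ B)) #(O \ M), (1 : ℝ) / ℓ :=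
    mul_nonneg m.cast_nonneg (sum_nonneg fun _ _ => by positivity)
  by_cases hB : B ⊆ O ∪ M
  · have hmiss :
        𝔼 E ∈ (O \ M).powersetCard #(M \ O), (if B ⊆ (O ∪ M) \ E then 0 else 1 : ℝ) ≤
          m * (((#(O \ M) - #(O \ (M ∪ B)) : ℕ) : ℝ) / #(O \ M)) := by
      have hinter : #((O \ M) ∩ B) = #(O \ M) - #(O \ (M ∪ B)) := by
        rw [hU, ← card_sdiff_add_card_inter (O \ M) B]
        omega
      calc _ ≤ 𝔼 E ∈ (O \ M).powersetCard #(M \ O),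
              (if Disjoint E B then 0 else 1 : ℝ) := by
            refine expect_le_expect fun E hE => ?_
            have hEB : Disjoint E B → B ⊆ (O ∪ M) \ E := fun h x hx =>
              mem_sdiff.2 ⟨hB hx, disjoint_right.1 h hx⟩
            split_ifs <;> simp_all
        _ ≤ #(M \ O) * #((O \ M) ∩ B) / #(O \ M) := expect_powersetCard_ite_disjoint_le _ _ _
        _ ≤ _ := by
            rw [hinter, mul_div_assoc]
            gcongr
            exact_mod_cast hq.trans' (hnew ▸ Nat.le_add_right _ _)
    have htail' := mul_le_mul_of_nonneg_left
      (sub_div_le_sum_Ioc_one_div #(O \ (M ∪ B)) #(O \ M)) m.cast_nonneg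
    rw [hsplit, mul_add, hnew, card_eq_zero.2 (sdiff_eq_empty_iff_subset.2 hB), add_zero]
    linarith
  · have hmiss :
        𝔼 E ∈ (O \ M).powersetCard #(M \ O), (if B ⊆ (O ∪ M) \ E then 0 else 1 : ℝ) ≤ 1 :=
      expect_le (powersetCard_nonempty.2 (by omega)) fun E _ => by split_ifs <;> norm_num
    have hpos : 0 < #(B \ (O ∪ M)) := card_pos.2 (sdiff_nonempty.2 hB)
    have hcost : ((m - #((M ∪ B) \ O) : ℕ) : ℝ) + 1 ≤ ((m - #(M \ O) : ℕ) : ℝ) := by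
      exact_mod_cast (by omega : m - #((M ∪ B) \ O) + 1 ≤ m - #(M \ O))
    rw [hsplit, mul_add]
    linarith

theorem expect_markExp_sdiff_le (O P : Finset Ω) (hPO : #P ≤ #O) (t : ℕ) (M : Finset Ω)
    (hMP : M ⊆ P) (hQP : ∀ s, t ≤ s → s ≤ T → Q s ⊆ P) :
    𝔼 E ∈ (O \ M).powersetCard #(M \ O), markExp Q (fun _ => False) T t ((O ∪ M) \ E) M ≤
      ((#(P \ O) - #(M \ O) : ℕ) : ℝ) +
        #(P \ O) * ∑ ℓ ∈ Icc (#(P \ O) + 1) #(O \ M), (1 : ℝ) / ℓ := by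
  rcases lt_or_ge T t with ht | ht
  · rw [expect_eq_zero fun E _ => markExp_of_lt Q T ht _ _]
    positivity
  have hM'P : M ∪ Q t ⊆ P := union_subset hMP (hQP t le_rfl ht)
  have hnew : #((M ∪ Q t) \ O) ≤ #(P \ O) := card_le_card (sdiff_subset_sdiff hM'P le_rfl)
  have hold : #(P \ O) ≤ #(O \ (M ∪ Q t)) := by
    have hPO' : #(P \ O) ≤ #(O \ P) := by
      rw [← card_sdiff_add_card_inter P O, ← card_sdiff_add_card_inter O P, inter_comm] at hPO
      omega
    exact hPO'.trans (card_le_card (sdiff_subset_sdiff le_rfl hM'P))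
  rw [expect_markExp_sdiff_eq Q T ht O M (hnew.trans hold)]
  refine (add_le_add_right (expect_markExp_sdiff_le O P hPO (t + 1) (M ∪ Q t) hM'P
    fun s hs hsT => hQP s (by omega) hsT) _).trans ?_
  exact expect_miss_add_le O M (Q t) hnew hold
termination_by T + 1 - t

end Marking

theorem stmt5_general [DecidableEq Ω] (k : ℕ)
    (Q : ℕ → Finset Ω) (a' a b : ℕ)
    (hprev : ((Finset.Icc a' (a - 1)).biUnion Q).card = k)
    (hphase : ((Finset.Icc a b).biUnion Q).card ≤ k)
    (m : ℕ)
    (hm : m = (((Finset.Icc a b).biUnion Q) \ ((Finset.Icc a' (a - 1)).biUnion Q)).card) :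
    markExp Q (fun _ => False) b a ((Finset.Icc a' (a - 1)).biUnion Q) ∅ ≤
      m + m * ∑ ℓ ∈ Finset.Icc (m + 1) k, (1 : ℝ) / ℓ := by
  have h := expect_markExp_sdiff_le Q b ((Icc a' (a - 1)).biUnion Q) ((Icc a b).biUnion Q)
    (hprev ▸ hphase) a ∅ (empty_subset _)
    fun s has hsb => subset_biUnion_of_mem Q (mem_Icc.2 ⟨has, hsb⟩)
  simpa only [sdiff_empty, empty_sdiff, card_empty, powersetCard_zero, expect_singleton,
    union_empty, Nat.sub_zero, ← hm, hprev] using h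

/-- Per-phase bound for the query-wise marking algorithm: on a phase `[a, b]` of the
phase partition whose preceding phase is `[a', a-1]` (requesting exactly `k` distinct
pages, which form the cache at the start of the phase), if the phase has `m` new pages
then the expected number of cache misses during the phase is at most
`m + m * ∑_{ℓ = m+1}^{k} 1/ℓ`. -/
theorem stmt5 [DecidableEq Ω] (l k : ℕ) (hl : 0 < l) (hlk : l ≤ k)
    (Q : ℕ → Finset Ω) (a' a b : ℕ) (ha' : 1 ≤ a') (ha : a' < a) (hb : a ≤ b)
    (hQ : ∀ t, 1 ≤ t → t ≤ b → (Q t).card = l)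
    (hprev : ((Finset.Icc a' (a - 1)).biUnion Q).card = k)
    (hphase : ((Finset.Icc a b).biUnion Q).card ≤ k)
    (m : ℕ)
    (hm : m = (((Finset.Icc a b).biUnion Q) \ ((Finset.Icc a' (a - 1)).biUnion Q)).card) :
    markExp Q (fun _ => False) b a ((Finset.Icc a' (a - 1)).biUnion Q) ∅ ≤
      m + m * ∑ ℓ ∈ Finset.Icc (m + 1) k, (1 : ℝ) / ℓ :=
  stmt5_general k Q a' a b hprev hphase m hm
end

section
/- Let l > 0 and 0 < h < k be real numbers, and define T(m) = l · m · (1 + ln(k/m)) / (k − h + m) for real m with 0 < m ≤ k. If k/(k−h) ≥ e, then T(m) ≤ l · (ln(k/(k−h)) − ln ln(k/(k−h)) + 1/2) for all m ∈ (0, k]; if k/(k−h) ≤ e, then T(m) ≤ l for all m ∈ (0, k]. -/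
/-- Tangent-line bound for log: `log x ≤ x·exp(−a) + a − 1`. -/
lemma logA_aux (x a : ℝ) (hx : 0 < x) :
    Real.log x ≤ x * Real.exp (-a) + a - 1 := by
  have h := Real.log_le_sub_one_of_pos (mul_pos hx (Real.exp_pos (-a)))
  rw [Real.log_mul hx.ne' (Real.exp_pos _).ne', Real.log_exp] at h
  linarith

/-- Numeric inequality: `exp(−3/2) + exp(−1/2) ≤ 1`. -/
lemma numeric_aux : Real.exp (-(3/2)) + Real.exp (-(1/2)) ≤ 1 := by
  set E := Real.exp (1/2) with hEdef
  have hEpos : 0 < E := Real.exp_pos _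
  have hE2 : E ^ 2 = Real.exp 1 := by
    rw [hEdef, ← Real.exp_nat_mul]; norm_num
  have hE3 : Real.exp (3/2) = E ^ 3 := by
    rw [hEdef, ← Real.exp_nat_mul]; norm_num
  have hgt : (2.7182818283 : ℝ) < Real.exp 1 := Real.exp_one_gt_d9
  have hlt : Real.exp 1 < 2.7182818286 := Real.exp_one_lt_d9
  have hElb : (1.64 : ℝ) ≤ E := by nlinarith
  have hkey : 1 + E ^ 2 ≤ E ^ 3 := by nlinarith
  have ha : Real.exp (-(3/2)) * E ^ 3 = 1 := by
    rw [← hE3, ← Real.exp_add]; norm_num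
  have hb : Real.exp (-(1/2)) * E ^ 3 = E ^ 2 := by
    rw [← hE3, ← Real.exp_add]
    norm_num
    rw [hE2]
  nlinarith [pow_pos hEpos 3, Real.exp_pos (-(3/2 : ℝ)), Real.exp_pos (-(1/2 : ℝ))]

/-- Bound on `T(m) = l·m·(1 + ln(k/m))/(k - h + m)` for `0 < m ≤ k`: if
`k/(k-h) ≥ e` then `T(m) ≤ l·(ln(k/(k-h)) - ln ln(k/(k-h)) + 1/2)`, and if
`k/(k-h) ≤ e` then `T(m) ≤ l`. -/
theorem stmt9 (l h k : ℝ) (hl : 0 < l) (hh : 0 < h) (hhk : h < k) :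
    (Real.exp 1 ≤ k / (k - h) →
      ∀ m : ℝ, 0 < m → m ≤ k →
        l * m * (1 + Real.log (k / m)) / (k - h + m) ≤
          l * (Real.log (k / (k - h)) - Real.log (Real.log (k / (k - h))) + 1 / 2)) ∧
    (k / (k - h) ≤ Real.exp 1 →
      ∀ m : ℝ, 0 < m → m ≤ k →
        l * m * (1 + Real.log (k / m)) / (k - h + m) ≤ l) := by
  have hc : 0 < k - h := by linarith
  have hk0 : 0 < k := by linarith
  have hkc : 0 < k / (k - h) := div_pos hk0 hc
  constructor
  · intro hE m hm hmk
    have hcm : 0 < k - h + m := by linarith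
    set L := Real.log (k / (k - h)) with hLdef
    have hL1 : (1 : ℝ) ≤ L := by
      have h1 := Real.log_le_log (Real.exp_pos 1) hE
      rwa [Real.log_exp] at h1
    have hLpos : 0 < L := by linarith
    have hlogL : 0 ≤ Real.log L := Real.log_nonneg hL1
    set B := L - Real.log L + 1/2 with hBdef
    have hkm : 0 < k / m := div_pos hk0 hm
    -- step a
    have h1 : Real.log (k / m) ≤ (k / m) * Real.exp (-B) + B - 1 := logA_aux _ _ hkm
    have h1' := mul_le_mul_of_nonneg_left h1 hm.le
    have hmk' : m * (k / m * Real.exp (-B)) = k * Real.exp (-B) := by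
      field_simp
    have h2 : m * (1 + Real.log (k / m)) ≤ m * B + k * Real.exp (-B) := by
      nlinarith [h1', hmk']
    -- step b : k * exp(-B) = (k-h) * (L * exp(-1/2))
    have hexpL : Real.exp L = k / (k - h) := Real.exp_log hkc
    have hkEq : k = (k - h) * Real.exp L := by
      rw [hexpL]; field_simp
    have hexpB : Real.exp (-B) = Real.exp (-L) * (Real.log L).exp * Real.exp (-(1/2)) := by
      rw [← Real.exp_add, ← Real.exp_add]
      congr 1
      rw [hBdef]; ring
    have h0 : Real.exp L * Real.exp (-L) = 1 := by
      rw [← Real.exp_add]; simp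
    have hkexp : k * Real.exp (-B) = (k - h) * (L * Real.exp (-(1/2))) := by
      calc k * Real.exp (-B)
          = (k - h) * Real.exp L * (Real.exp (-L) * (Real.log L).exp * Real.exp (-(1/2))) := by
            rw [← hkEq, hexpB]
        _ = (Real.exp L * Real.exp (-L)) * ((k - h) * ((Real.log L).exp * Real.exp (-(1/2)))) := by
            ring
        _ = (k - h) * ((Real.log L).exp * Real.exp (-(1/2))) := by rw [h0, one_mul]
        _ = (k - h) * (L * Real.exp (-(1/2))) := by rw [Real.exp_log hLpos]
    -- step c : L * exp(-1/2) ≤ B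
    have hnum := numeric_aux
    have hlogL2 : Real.log L ≤ L * Real.exp (-(3/2)) + 1/2 := by
      have := logA_aux L (3/2) hLpos
      linarith
    have h3 : L * Real.exp (-(1/2)) ≤ B := by
      have hmono : L * Real.exp (-(3/2)) ≤ L * (1 - Real.exp (-(1/2))) :=
        mul_le_mul_of_nonneg_left (by linarith) (by linarith)
      rw [hBdef]
      nlinarith [hmono, hlogL2]
    have h4 : k * Real.exp (-B) ≤ (k - h) * B := by
      rw [hkexp]
      exact mul_le_mul_of_nonneg_left h3 hc.le
    have key : m * (1 + Real.log (k / m)) ≤ B * (k - h + m) := by nlinarith [h2, h4]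
    rw [div_le_iff₀ hcm]
    calc l * m * (1 + Real.log (k / m)) = l * (m * (1 + Real.log (k / m))) := by ring
      _ ≤ l * (B * (k - h + m)) := mul_le_mul_of_nonneg_left key hl.le
      _ = l * B * (k - h + m) := by ring
  · intro hE m hm hmk
    have hcm : 0 < k - h + m := by linarith
    have hkm : 0 < k / m := div_pos hk0 hm
    have h1 : Real.log (k / m) ≤ (k / m) * Real.exp (-1) + 1 - 1 := logA_aux _ 1 hkm
    have h1' := mul_le_mul_of_nonneg_left h1 hm.le
    have hmk' : m * (k / m * Real.exp (-1)) = k * Real.exp (-1) := by field_simp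
    have h2 : m * (1 + Real.log (k / m)) ≤ m + k * Real.exp (-1) := by
      nlinarith [h1', hmk']
    have hk' : k ≤ Real.exp 1 * (k - h) := by
      rw [div_le_iff₀ hc] at hE; linarith
    have hid : Real.exp 1 * Real.exp (-1) = 1 := by
      rw [← Real.exp_add]; simp
    have h4 : k * Real.exp (-1) ≤ k - h := by
      have ha : k * Real.exp (-1) ≤ Real.exp 1 * (k - h) * Real.exp (-1) :=
        mul_le_mul_of_nonneg_right hk' (Real.exp_pos _).le
      have hb : Real.exp 1 * (k - h) * Real.exp (-1) = k - h := by
        rw [mul_comm (Real.exp 1), mul_assoc, hid, mul_one]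
      linarith
    have key : m * (1 + Real.log (k / m)) ≤ k - h + m := by linarith
    rw [div_le_iff₀ hcm]
    calc l * m * (1 + Real.log (k / m)) = l * (m * (1 + Real.log (k / m))) := by ring
      _ ≤ l * (k - h + m) := mul_le_mul_of_nonneg_left key hl.le
end

section
/- For all real numbers s and u with s ≥ e, u > 0, and u + ln u = ln s, one has u ≤ ln s − ln ln s + 1/2. -/
open Real

lemma aux_mono10 {a b : ℝ} (ha : 0 < a) (hb : 0 < b)
    (h : a + Real.log a ≤ b + Real.log b) : a ≤ b := by
  by_contra hlt
  push_neg at hlt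
  have := Real.log_lt_log hb hlt
  linarith

/-- If `s ≥ e`, `u > 0` and `u + ln u = ln s`, then `u ≤ ln s - ln ln s + 1/2`. -/
theorem stmt10 (s u : ℝ) (hs : Real.exp 1 ≤ s) (hu : 0 < u)
    (heq : u + Real.log u = Real.log s) :
    u ≤ Real.log s - Real.log (Real.log s) + 1 / 2 := by
  set L := Real.log s with hLdef
  have hL : 1 ≤ L := by
    have := Real.log_le_log (Real.exp_pos 1) hs
    simpa using this
  have hLpos : 0 < L := by linarith
  -- exp (1/2) > 1.64
  have hexphalf : (1.64 : ℝ) < Real.exp (1/2) := by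
    nlinarith [Real.exp_one_gt_d9, Real.exp_pos (1/2),
      (by rw [← Real.exp_add]; norm_num : Real.exp (1/2) * Real.exp (1/2) = Real.exp 1)]
  have he : (2.7182818283 : ℝ) < Real.exp 1 := Real.exp_one_gt_d9
  -- ln L ≤ L / e  (via log_le_sub_one on L/e, i.e. ln L ≤ 1 + (L/e - 1))
  have hlogL : Real.log L ≤ L / Real.exp 1 := by
    have h1 : Real.log (L / Real.exp 1) ≤ L / Real.exp 1 - 1 :=
      Real.log_le_sub_one_of_pos (by positivity)
    rw [Real.log_div (ne_of_gt hLpos) (ne_of_gt (Real.exp_pos 1)), Real.log_exp] at h1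
    linarith
  -- key: L * exp(-1/2) + ln(L * exp(-1/2)) ≤ L
  have hkey : L * Real.exp (-(1/2)) + Real.log (L * Real.exp (-(1/2))) ≤ L := by
    rw [Real.log_mul (ne_of_gt hLpos) (ne_of_gt (Real.exp_pos _)), Real.log_exp]
    have hinv : Real.exp (-(1/2)) = 1 / Real.exp (1/2) := by
      rw [Real.exp_neg]; ring
    have h1 : Real.exp (-(1/2)) < 1 / 1.64 := by
      rw [hinv]
      apply div_lt_div_of_pos_left <;> [norm_num; norm_num; exact hexphalf]
    have h2 : L / Real.exp 1 < L / 2.7182818283 := by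
      apply div_lt_div_of_pos_left hLpos (by norm_num) he
    have h3 : L * Real.exp (-(1/2)) ≤ L * (1/1.64) := by nlinarith
    have h4 : L / 2.7182818283 + L * (1/1.64) ≤ L := by rw [div_eq_mul_inv]; nlinarith [hLpos]
    linarith
  have hub : L * Real.exp (-(1/2)) ≤ u := by
    apply aux_mono10 (by positivity) hu
    rw [heq]; exact hkey
  have hlogu : Real.log L - 1/2 ≤ Real.log u := by
    have := Real.log_le_log (by positivity) hub
    rwa [Real.log_mul (ne_of_gt hLpos) (ne_of_gt (Real.exp_pos _)), Real.log_exp] at this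
  linarith
end

section
/- Let k, h, l be positive integers with l ≤ h ≤ k, set b = k + 1 and c = k − h + l + 1, and assume b/c ≥ e. Define f(m) = (m/(c + m)) · ln(b/(c + m)) for natural numbers m. Then there exists a natural number m such that l divides k − h + m and f(m) ≥ ln(b/c) − ln ln(b/c) − 2. -/
set_option maxHeartbeats 1000000


/-- With `b = k + 1` and `c = k - h + l + 1`, if `b/c ≥ e` then there is a natural
number `m` with `l ∣ (k - h + m)` such that
`f(m) = (m/(c+m))·ln(b/(c+m)) ≥ ln(b/c) - ln ln(b/c) - 2`. -/
theorem stmt11 (k h l : ℕ) (hl : 0 < l) (hlh : l ≤ h) (hhk : h ≤ k)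
    (hbc : Real.exp 1 ≤ ((k : ℝ) + 1) / ((k : ℝ) - (h : ℝ) + (l : ℝ) + 1)) :
    ∃ m : ℕ, l ∣ (k - h + m) ∧
      Real.log (((k : ℝ) + 1) / ((k : ℝ) - (h : ℝ) + (l : ℝ) + 1)) -
          Real.log (Real.log (((k : ℝ) + 1) / ((k : ℝ) - (h : ℝ) + (l : ℝ) + 1))) - 2 ≤
        ((m : ℝ) / (((k : ℝ) - (h : ℝ) + (l : ℝ) + 1) + (m : ℝ))) *
          Real.log (((k : ℝ) + 1) / (((k : ℝ) - (h : ℝ) + (l : ℝ) + 1) + (m : ℝ))) := by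
  have hhkR : (h : ℝ) ≤ (k : ℝ) := by exact_mod_cast hhk
  have hlR : (0 : ℝ) < (l : ℝ) := by exact_mod_cast hl
  set c : ℝ := (k : ℝ) - (h : ℝ) + (l : ℝ) + 1 with hcdef
  set b : ℝ := (k : ℝ) + 1 with hbdef
  have hc0 : 0 < c := by rw [hcdef]; linarith
  have hb0 : 0 < b := by rw [hbdef]; positivity
  set L : ℝ := Real.log (b / c) with hLdef
  have hL1 : 1 ≤ L := by
    rw [hLdef]
    calc (1 : ℝ) = Real.log (Real.exp 1) := (Real.log_exp 1).symm
      _ ≤ Real.log (b / c) := Real.log_le_log (Real.exp_pos 1) hbc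
  have hL0 : 0 < L := by linarith
  set M : ℝ := c * (L - 1) with hMdef
  have hM0 : 0 ≤ M := by rw [hMdef]; nlinarith
  set N : ℕ := ⌈(((k - h : ℕ) : ℝ) + M) / l⌉₊ with hNdef
  have haR : ((k - h : ℕ) : ℝ) = (k : ℝ) - (h : ℝ) := by
    push_cast [Nat.cast_sub hhk]; ring
  have hx0 : 0 ≤ (((k - h : ℕ) : ℝ) + M) / l := by
    rw [haR]
    apply div_nonneg _ (le_of_lt hlR)
    linarith
  have hNlb : ((k - h : ℕ) : ℝ) + M ≤ (l : ℝ) * N := by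
    have h1 := Nat.le_ceil ((((k - h : ℕ) : ℝ) + M) / l)
    rw [← hNdef] at h1
    have := mul_le_mul_of_nonneg_left h1 (le_of_lt hlR)
    calc ((k - h : ℕ) : ℝ) + M = (l : ℝ) * ((((k - h : ℕ) : ℝ) + M) / l) := by
          field_simp
      _ ≤ (l : ℝ) * N := this
  have hNub : (l : ℝ) * N ≤ ((k - h : ℕ) : ℝ) + M + l := by
    have h1 := Nat.ceil_lt_add_one hx0
    rw [← hNdef] at h1
    have := mul_le_mul_of_nonneg_left (le_of_lt h1) (le_of_lt hlR)
    calc (l : ℝ) * N ≤ (l : ℝ) * ((((k - h : ℕ) : ℝ) + M) / l + 1) := this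
      _ = ((k - h : ℕ) : ℝ) + M + l := by field_simp
  have halN : k - h ≤ l * N := by
    have : ((k - h : ℕ) : ℝ) ≤ ((l * N : ℕ) : ℝ) := by push_cast; linarith
    exact_mod_cast this
  refine ⟨l * N - (k - h), ⟨N, by omega⟩, ?_⟩
  set m : ℕ := l * N - (k - h) with hmdef
  have hmR : (m : ℝ) = (l : ℝ) * N - ((k - h : ℕ) : ℝ) := by
    rw [hmdef]
    push_cast [Nat.cast_sub halN]
    ring
  have hmlb : M ≤ (m : ℝ) := by rw [hmR]; linarith
  have hmub : (m : ℝ) ≤ M + l := by rw [hmR]; linarith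
  have hm0 : 0 ≤ (m : ℝ) := le_trans hM0 hmlb
  have hlc : (l : ℝ) ≤ c := by rw [hcdef]; linarith
  have hcm_lb : c * L ≤ c + m := by
    have : c * L = c + M := by rw [hMdef]; ring
    linarith
  have hcm_ub : c + m ≤ c * (L + 1) := by
    have : c * (L + 1) = c + M + c := by rw [hMdef]; ring
    linarith
  have hcm0 : 0 < c + m := lt_of_lt_of_le (by positivity) hcm_lb
  -- ratio bound
  have h1 : (L - 1) / L ≤ (m : ℝ) / (c + m) := by
    rw [div_le_div_iff₀ hL0 hcm0]
    nlinarith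
  -- log bound
  have h2 : L - Real.log (L + 1) ≤ Real.log (b / (c + m)) := by
    have e1 : Real.log (b / (c + m)) = Real.log b - Real.log (c + m) :=
      Real.log_div (ne_of_gt hb0) (ne_of_gt hcm0)
    have e2 : L = Real.log b - Real.log c := by
      rw [hLdef, Real.log_div (ne_of_gt hb0) (ne_of_gt hc0)]
    have e3 : Real.log (c + m) ≤ Real.log (c * (L + 1)) :=
      Real.log_le_log hcm0 hcm_ub
    have e4 : Real.log (c * (L + 1)) = Real.log c + Real.log (L + 1) :=
      Real.log_mul (ne_of_gt hc0) (by linarith)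
    linarith
  have h3 : 0 ≤ L - Real.log (L + 1) := by
    have : Real.log (L + 1) ≤ Real.log (Real.exp L) :=
      Real.log_le_log (by linarith) (Real.add_one_le_exp L)
    rw [Real.log_exp] at this
    linarith
  have h4 : 0 ≤ (m : ℝ) / (c + m) := by positivity
  have hmul : (L - 1) / L * (L - Real.log (L + 1)) ≤
      (m : ℝ) / (c + m) * Real.log (b / (c + m)) :=
    mul_le_mul h1 h2 h3 h4
  -- final arithmetic bound
  have hA : Real.log (L + 1) ≤ Real.log L + 1 := by
    have hle : L + 1 ≤ Real.exp 1 * L := by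
      nlinarith [Real.add_one_le_exp (1 : ℝ)]
    have := Real.log_le_log (by linarith) hle
    rw [Real.log_mul (Real.exp_ne_zero 1) (ne_of_gt hL0), Real.log_exp] at this
    linarith
  have hB : 0 ≤ Real.log (L + 1) := Real.log_nonneg (by linarith)
  have hkey : L - Real.log L - 2 ≤ (L - 1) / L * (L - Real.log (L + 1)) := by
    rw [div_mul_eq_mul_div, le_div_iff₀ hL0]
    have hP : 0 ≤ L * (Real.log L + 1 - Real.log (L + 1)) :=
      mul_nonneg (le_of_lt hL0) (by linarith)
    nlinarith [hP, hB]
  calc L - Real.log L - 2 ≤ (L - 1) / L * (L - Real.log (L + 1)) := hkey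
    _ ≤ (m : ℝ) / (c + m) * Real.log (b / (c + m)) := hmul
end

section
/- (Virtual cache equivalence.) Let l ≥ 1, k ≥ l, and let g be a natural number with g·l² ≤ k. Let c_1, …, c_{k+gl} be distinct pages, let C* = {c_1, …, c_{k+gl}}, and for each i ∈ {1, …, l+1} define C^i = C* \ {c_{(i−1)gl+1}, …, c_{igl}} (well-defined since g·l·(l+1) ≤ k + gl), so each C^i has cardinality k. Then for every query Q of cardinality l: Q ⊆ C* if and only if there exists i ∈ {1, …, l+1} with Q ⊆ C^i. Equivalently, the miss indicators agree: 1[Q ⊄ C*] = ∏_{i=1}^{l+1} 1[Q ⊄ C^i]. -/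
variable {Ω : Type*}

/-- Virtual cache equivalence: if the virtual cache `C* = {c 1, …, c (k + g·l)}`
(with distinct pages) is distributed among `l + 1` actual caches by deleting from `C*`
the `i`-th consecutive block of `g·l` pages, then a query of cardinality `l` is
contained in the virtual cache iff it is contained in at least one actual cache. -/
theorem stmt13 [DecidableEq Ω] (l k g : ℕ) (hl : 1 ≤ l) (hlk : l ≤ k)
    (hg : g * l ^ 2 ≤ k)
    (c : ℕ → Ω) (hc : Set.InjOn c (Set.Icc 1 (k + g * l)))
    (Cstar : Finset Ω) (hCstar : Cstar = (Finset.Icc 1 (k + g * l)).image c)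
    (Cc : ℕ → Finset Ω)
    (hCc : ∀ i, 1 ≤ i → i ≤ l + 1 →
      Cc i = Cstar \ (Finset.Icc ((i - 1) * g * l + 1) (i * g * l)).image c)
    (Q : Finset Ω) (hQ : Q.card = l) :
    Q ⊆ Cstar ↔ ∃ i, 1 ≤ i ∧ i ≤ l + 1 ∧ Q ⊆ Cc i := by
  constructor
  · intro hQC
    by_contra h
    push_neg at h
    have key : ∀ i ∈ Finset.Icc 1 (l + 1), ∃ x ∈ Q,
        x ∈ (Finset.Icc ((i - 1) * g * l + 1) (i * g * l)).image c := by
      intro i hi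
      simp only [Finset.mem_Icc] at hi
      obtain ⟨x, hxQ, hx⟩ := Finset.not_subset.mp (h i hi.1 hi.2)
      rw [hCc i hi.1 hi.2, Finset.mem_sdiff] at hx
      push_neg at hx
      exact ⟨x, hxQ, hx (hQC hxQ)⟩
    have hQne : Q.Nonempty := Finset.card_pos.mp (by omega)
    have : Inhabited Ω := ⟨hQne.choose⟩
    choose! f hfQ hfB using key
    have hub : ∀ i, i ≤ l + 1 → i * g * l ≤ k + g * l := by
      intro i hi
      have h1 : i * (g * l) ≤ (l + 1) * (g * l) := Nat.mul_le_mul_right _ hi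
      have h2 : (l + 1) * (g * l) = g * l ^ 2 + g * l := by ring
      have := h1.trans_eq h2
      rw [mul_assoc]
      omega
    have hcard : (Finset.Icc 1 (l + 1)).card ≤ Q.card := by
      apply Finset.card_le_card_of_injOn f (fun i hi => hfQ i hi)
      intro i hi j hj hij
      simp only [Finset.mem_coe, Finset.mem_Icc] at hi hj
      obtain ⟨a, ha, hca⟩ := Finset.mem_image.mp (hfB i (Finset.mem_Icc.mpr hi))
      obtain ⟨b, hb, hcb⟩ := Finset.mem_image.mp (hfB j (Finset.mem_Icc.mpr hj))
      simp only [Finset.mem_Icc] at ha hb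
      have hab : a = b := by
        apply hc ⟨by omega, le_trans ha.2 (hub i hi.2)⟩ ⟨by omega, le_trans hb.2 (hub j hj.2)⟩
        rw [hca, hcb, hij]
      have ha2 : a ≤ i * (g * l) := by rw [← mul_assoc]; exact ha.2
      have ha1 : (i - 1) * (g * l) + 1 ≤ a := by rw [← mul_assoc]; exact ha.1
      have hb2 : b ≤ j * (g * l) := by rw [← mul_assoc]; exact hb.2
      have hb1 : (j - 1) * (g * l) + 1 ≤ b := by rw [← mul_assoc]; exact hb.1
      rcases lt_trichotomy i j with hlt | heq | hgt
      · have h1 : i ≤ j - 1 := by omega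
        have h2 : i * (g * l) ≤ (j - 1) * (g * l) := Nat.mul_le_mul_right _ h1
        omega
      · exact heq
      · have h1 : j ≤ i - 1 := by omega
        have h2 : j * (g * l) ≤ (i - 1) * (g * l) := Nat.mul_le_mul_right _ h1
        omega
    rw [Nat.card_Icc, hQ] at hcard
    omega
  · rintro ⟨i, h1, h2, hQCc⟩
    refine hQCc.trans ?_
    rw [hCc i h1 h2]
    exact Finset.sdiff_subset
end
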